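/- arXiv:gr-qc/0210088 — 4 statements merged into one kernel-verified Lean document; each statement's English description precedes it below -/
import Mathlib

section
/- Let G, H, J : I × ℝ → ℝ be C¹ functions, 2π-periodic in the second variable θ, on I × ℝ with I ⊂ (0,∞) an interval, satisfying (∂/∂t − ∂/∂θ)(G + H) = J, (∂/∂t + ∂/∂θ)(G − H) = J, G ≥ 0, |H| ≤ G, and J(t,θ) ≤ G(t,θ)/t everywhere. Then for all t₀, t̂ ∈ I with t₀ ≤ t̂: sup_θ G(t̂, θ) ≤ 2 sup_θ G(t₀, θ) + 2 sup_θ |H(t₀, θ)| + ∫_{t₀}^{t̂} (1/s)·sup_θ G(s, θ) ds. -/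
open Real Set

/-- Partial derivative with respect to the first (time) variable. -/
noncomputable def pd1 (f : ℝ → ℝ → ℝ) (t θ : ℝ) : ℝ := deriv (fun s => f s θ) t
/-- Partial derivative with respect to the second (space) variable. -/
noncomputable def pd2 (f : ℝ → ℝ → ℝ) (t θ : ℝ) : ℝ := deriv (fun x => f t x) θ

/-! Along the null lines `θ ∓ s = const` the equations for `G ± H` become the ordinary
differential equations `d/ds (G ± H) = J`, so `(G ± H)(t, θ)` is the value of `G ± H` at the
foot of the null line through `(t, θ)` at time `t₀`, plus the integral of `J` along that line.
Adding the two, bounding `G ± H ≤ 2 G` at time `t₀` by `|H| ≤ G`, and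
`J ≤ G / s ≤ (1/s) sup G` under the integral gives
`G (t, θ) ≤ 2 sup G(t₀) + ∫ (1/s) sup G(s) ds`. Periodicity in `θ` makes each supremum finite
and continuous in time. -/

section PartialDerivatives

variable {f : ℝ → ℝ → ℝ} {t θ : ℝ}

theorem pd1_eq_fderiv (hf : DifferentiableAt ℝ (Function.uncurry f) (t, θ)) :
    pd1 f t θ = fderiv ℝ (Function.uncurry f) (t, θ) (1, 0) := by
  have h : HasDerivAt (fun s => f s θ) (fderiv ℝ (Function.uncurry f) (t, θ) (1, 0)) t :=
    HasFDerivAt.comp_hasDerivAt (l := Function.uncurry f) t hf.hasFDerivAt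
      ((hasDerivAt_id t).prodMk (hasDerivAt_const t θ))
  exact h.deriv

theorem pd2_eq_fderiv (hf : DifferentiableAt ℝ (Function.uncurry f) (t, θ)) :
    pd2 f t θ = fderiv ℝ (Function.uncurry f) (t, θ) (0, 1) := by
  have h : HasDerivAt (fun x => f t x) (fderiv ℝ (Function.uncurry f) (t, θ) (0, 1)) θ :=
    HasFDerivAt.comp_hasDerivAt (l := Function.uncurry f) θ hf.hasFDerivAt
      ((hasDerivAt_const θ t).prodMk (hasDerivAt_id θ))
  exact h.deriv

theorem hasDerivAt_comp_curve {x : ℝ → ℝ} {ε : ℝ}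
    (hf : DifferentiableAt ℝ (Function.uncurry f) (t, x t)) (hx : HasDerivAt x ε t) :
    HasDerivAt (fun s => f s (x s)) (pd1 f t (x t) + ε * pd2 f t (x t)) t := by
  have key : HasDerivAt (fun s => f s (x s)) (fderiv ℝ (Function.uncurry f) (t, x t) (1, ε)) t :=
    HasFDerivAt.comp_hasDerivAt (l := Function.uncurry f) t hf.hasFDerivAt
      ((hasDerivAt_id t).prodMk hx)
  rw [pd1_eq_fderiv hf, pd2_eq_fderiv hf, ← smul_eq_mul, ← map_smul, ← map_add]
  simpa using key

end PartialDerivatives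

theorem integral_along_line_eq_sub {f J : ℝ → ℝ → ℝ} {a b θ ε : ℝ}
    (hf : ContDiff ℝ 1 (Function.uncurry f)) (hJ : Continuous (Function.uncurry J))
    (hfJ : ∀ s ∈ uIcc a b, pd1 f s (θ + ε * (s - b)) + ε * pd2 f s (θ + ε * (s - b))
      = J s (θ + ε * (s - b))) :
    ∫ s in a..b, J s (θ + ε * (s - b)) = f b θ - f a (θ + ε * (a - b)) := by
  have hline : Continuous fun s => θ + ε * (s - b) := by fun_prop
  refine (intervalIntegral.integral_eq_sub_of_hasDerivAt (f := fun s => f s (θ + ε * (s - b)))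
    (f' := fun s => J s (θ + ε * (s - b))) (fun s hs => ?_)
    ((hJ.comp (continuous_id.prodMk hline)).intervalIntegrable a b)).trans (by simp)
  rw [← hfJ s hs]
  refine hasDerivAt_comp_curve ((hf.differentiable one_ne_zero) _) ?_
  simpa using (((hasDerivAt_id s).sub_const b).const_mul ε).const_add θ

section PeriodicSupremum

variable {G : ℝ → ℝ → ℝ} {T : ℝ}

theorem le_iSup_of_periodic (hT : T ≠ 0) (hG : Continuous (Function.uncurry G))
    (hper : ∀ s, Function.Periodic (G s) T) (s θ : ℝ) : G s θ ≤ ⨆ θ, G s θ :=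
  le_ciSup ((hper s).compact_of_continuous hT
    (hG.comp (continuous_const.prodMk continuous_id))).bddAbove θ

theorem continuous_iSup_of_periodic (hT : T ≠ 0) (hG : Continuous (Function.uncurry G))
    (hper : ∀ s, Function.Periodic (G s) T) : Continuous fun s => ⨆ θ, G s θ := by
  have hsup : (fun s => ⨆ θ, G s θ) = fun s => sSup (G s '' uIcc 0 T) := by
    funext s
    rw [← zero_add T, (hper s).image_uIcc hT 0]
    rfl
  rw [hsup]
  exact isCompact_uIcc.continuous_sSup hG

theorem integral_along_curve_le_integral_inv_mul_iSup {J : ℝ → ℝ → ℝ} {x : ℝ → ℝ}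
    {a b : ℝ}
    (hT : T ≠ 0) (hG : Continuous (Function.uncurry G)) (hper : ∀ s, Function.Periodic (G s) T)
    (hJ : Continuous (Function.uncurry J)) (hx : Continuous x) (hab : a ≤ b) (ha : 0 < a)
    (hJG : ∀ s ∈ Icc a b, ∀ θ, J s θ ≤ G s θ / s) :
    ∫ s in a..b, J s (x s) ≤ ∫ s in a..b, 1 / s * ⨆ θ, G s θ := by
  have hpos : ∀ s ∈ Icc a b, 0 < s := fun s hs => ha.trans_le hs.1
  refine intervalIntegral.integral_mono_on hab
    ((hJ.comp (continuous_id.prodMk hx)).intervalIntegrable a b) ?_ fun s hs => ?_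
  · refine ContinuousOn.intervalIntegrable ?_
    rw [uIcc_of_le hab]
    exact (continuousOn_const.div continuousOn_id fun s hs => (hpos s hs).ne').mul
      (continuous_iSup_of_periodic hT hG hper).continuousOn
  · calc J s (x s) ≤ G s (x s) / s := hJG s hs _
      _ = 1 / s * G s (x s) := by ring
      _ ≤ 1 / s * ⨆ θ, G s θ :=
        mul_le_mul_of_nonneg_left (le_iSup_of_periodic hT hG hper s _)
          (one_div_nonneg.mpr (hpos s hs).le)

end PeriodicSupremum

theorem sup_energy_inequality_general
    (G H J : ℝ → ℝ → ℝ) (I : Set ℝ) (hI : I ⊆ Ioi 0) (hIconn : I.OrdConnected)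
    (hG : ContDiff ℝ 1 (Function.uncurry G))
    (hH : ContDiff ℝ 1 (Function.uncurry H))
    (hJ : ContDiff ℝ 1 (Function.uncurry J))
    (hGper : ∀ t : ℝ, Function.Periodic (G t) (2*π))
    (hminus : ∀ t ∈ I, ∀ θ : ℝ,
      pd1 (fun t θ => G t θ + H t θ) t θ - pd2 (fun t θ => G t θ + H t θ) t θ = J t θ)
    (hplus : ∀ t ∈ I, ∀ θ : ℝ,
      pd1 (fun t θ => G t θ - H t θ) t θ + pd2 (fun t θ => G t θ - H t θ) t θ = J t θ)
    (hHG : ∀ t ∈ I, ∀ θ : ℝ, |H t θ| ≤ G t θ)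
    (hJG : ∀ t ∈ I, ∀ θ : ℝ, J t θ ≤ G t θ / t) :
    ∀ t₀ ∈ I, ∀ tf ∈ I, t₀ ≤ tf →
      (⨆ θ : ℝ, G tf θ) ≤
        2 * (⨆ θ : ℝ, G t₀ θ) + 2 * (⨆ θ : ℝ, |H t₀ θ|)
          + ∫ s in t₀..tf, (1/s) * ⨆ θ : ℝ, G s θ := by
  intro t₀ ht₀ tf htf hle
  have hIcc : Icc t₀ tf ⊆ I := hIconn.out ht₀ htf
  have huIcc : uIcc t₀ tf ⊆ I := uIcc_of_le hle ▸ hIcc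
  have hT : 2 * π ≠ 0 := two_pi_pos.ne'
  have hsupG := le_iSup_of_periodic hT hG.continuous hGper t₀
  have hJint (x : ℝ → ℝ) (hx : Continuous x) :=
    integral_along_curve_le_integral_inv_mul_iSup hT hG.continuous hGper hJ.continuous hx hle
      (hI ht₀) fun s hs => hJG s (hIcc hs)
  refine ciSup_le fun θ => ?_
  have hGaddH := integral_along_line_eq_sub (θ := θ) (ε := -1)
    (f := fun t θ => G t θ + H t θ) (hG.add hH) hJ.continuous
    fun s hs => by rw [← hminus s (huIcc hs)]; ring
  have hGsubH := integral_along_line_eq_sub (θ := θ) (ε := 1)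
    (f := fun t θ => G t θ - H t θ) (hG.sub hH) hJ.continuous
    fun s hs => by simpa only [one_mul] using hplus s (huIcc hs) (θ + 1 * (s - tf))
  have hHG₁ := abs_le.mp (hHG t₀ ht₀ (θ + -1 * (t₀ - tf)))
  have hHG₂ := abs_le.mp (hHG t₀ ht₀ (θ + 1 * (t₀ - tf)))
  linarith [hJint _ (by fun_prop : Continuous fun s => θ + -1 * (s - tf)),
    hJint _ (by fun_prop : Continuous fun s => θ + 1 * (s - tf)),
    hsupG (θ + -1 * (t₀ - tf)), hsupG (θ + 1 * (t₀ - tf)),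
    Real.iSup_nonneg fun θ => abs_nonneg (H t₀ θ)]

/-- The supremum inequality obtained from the null-cone integral representation
of the energy `G` of the T³-Gowdy EMDA system, taking supremums over the
`2π`-periodic spatial variable `θ`. -/
theorem sup_energy_inequality
    (G H J : ℝ → ℝ → ℝ) (I : Set ℝ) (hI : I ⊆ Ioi 0) (hIconn : I.OrdConnected)
    (hG : ContDiff ℝ 1 (Function.uncurry G))
    (hH : ContDiff ℝ 1 (Function.uncurry H))
    (hJ : ContDiff ℝ 1 (Function.uncurry J))
    (hGper : ∀ t : ℝ, Function.Periodic (G t) (2*π))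
    (hHper : ∀ t : ℝ, Function.Periodic (H t) (2*π))
    (hJper : ∀ t : ℝ, Function.Periodic (J t) (2*π))
    (hminus : ∀ t ∈ I, ∀ θ : ℝ,
      pd1 (fun t θ => G t θ + H t θ) t θ - pd2 (fun t θ => G t θ + H t θ) t θ = J t θ)
    (hplus : ∀ t ∈ I, ∀ θ : ℝ,
      pd1 (fun t θ => G t θ - H t θ) t θ + pd2 (fun t θ => G t θ - H t θ) t θ = J t θ)
    (hGpos : ∀ t ∈ I, ∀ θ : ℝ, 0 ≤ G t θ)
    (hHG : ∀ t ∈ I, ∀ θ : ℝ, |H t θ| ≤ G t θ)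
    (hJG : ∀ t ∈ I, ∀ θ : ℝ, J t θ ≤ G t θ / t) :
    ∀ t₀ ∈ I, ∀ tf ∈ I, t₀ ≤ tf →
      (⨆ θ : ℝ, G tf θ) ≤
        2 * (⨆ θ : ℝ, G t₀ θ) + 2 * (⨆ θ : ℝ, |H t₀ θ|)
          + ∫ s in t₀..tf, (1/s) * ⨆ θ : ℝ, G s θ :=
  sup_energy_inequality_general G H J I hI hIconn hG hH hJ hGper hminus hplus hHG hJG
end

section
/- Let G, H, J : I × ℝ → ℝ be C¹ functions, 2π-periodic in the second variable θ, on I × ℝ with I ⊂ (0,∞) an interval containing t₀, satisfying (∂/∂t − ∂/∂θ)(G + H) = J, (∂/∂t + ∂/∂θ)(G − H) = J, G ≥ 0, |H| ≤ G, and J(t,θ) ≥ −G(t,θ)/t everywhere. Then for all t ∈ I with t ≤ t₀: sup_θ G(t, θ) ≤ 2·[sup_θ G(t₀, θ) + sup_θ |H(t₀, θ)|]·(t₀/t). -/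
/-!
Along the characteristics `θ ∓ t` the functions `G ± H` have derivative `J ≥ -G/t ≥ -F(t)/t`,
where `F(t) = sup_θ G(t, θ)`. Integrating from `s` up to `t₀` along both characteristics through
`(s, θ)` and averaging gives `F(s) ≤ M + ∫_s^{t₀} F(σ)/σ dσ` with
`M = sup G(t₀, ·) + sup |H(t₀, ·)|`. For this kernel Gronwall's argument is that
`s ↦ s (M + ∫_s^{t₀} F(σ)/σ dσ)` is nondecreasing, whence `F(t) ≤ M t₀ / t`.
-/

open Real Set

open Function MeasureTheory

theorem continuous_iSup_of_periodic_s8 {X : Type*} [TopologicalSpace X] {f : X → ℝ → ℝ} {c : ℝ}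
    (hc : c ≠ 0) (hf : Continuous (uncurry f)) (hper : ∀ x, Periodic (f x) c) :
    Continuous fun x => ⨆ θ, f x θ := by
  have h : ∀ x, ⨆ θ, f x θ = sSup (f x '' uIcc 0 (0 + c)) := fun x => by
    rw [(hper x).image_uIcc hc 0]; rfl
  simpa only [h] using isCompact_uIcc.continuous_sSup hf

theorem Function.Periodic.le_ciSup_of_continuous {f : ℝ → ℝ} {c : ℝ} (hp : Periodic f c)
    (hc : c ≠ 0) (hf : Continuous f) (θ : ℝ) : f θ ≤ ⨆ x, f x :=
  le_ciSup (hp.compact_of_continuous hc hf).bddAbove θ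

theorem hasDerivAt_pd1 {f : ℝ → ℝ → ℝ} {t θ : ℝ} (hf : DifferentiableAt ℝ (uncurry f) (t, θ)) :
    HasDerivAt (fun s => f s θ) (fderiv ℝ (uncurry f) (t, θ) (1, 0)) t :=
  hf.hasFDerivAt.comp_hasDerivAt (x := t) (f := fun s => (s, θ))
    ((hasDerivAt_id t).prodMk (hasDerivAt_const t θ))

theorem hasDerivAt_pd2 {f : ℝ → ℝ → ℝ} {t θ : ℝ} (hf : DifferentiableAt ℝ (uncurry f) (t, θ)) :
    HasDerivAt (fun x => f t x) (fderiv ℝ (uncurry f) (t, θ) (0, 1)) θ :=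
  hf.hasFDerivAt.comp_hasDerivAt (x := θ) (f := fun x => (t, x))
    ((hasDerivAt_const θ t).prodMk (hasDerivAt_id θ))

theorem hasDerivAt_comp_line {f : ℝ → ℝ → ℝ} {c v σ : ℝ}
    (hf : DifferentiableAt ℝ (uncurry f) (σ, c + v * σ)) :
    HasDerivAt (fun s => f s (c + v * s))
      (pd1 f σ (c + v * σ) + v * pd2 f σ (c + v * σ)) σ := by
  have hline : HasDerivAt (fun s => (s, c + v * s)) ((1 : ℝ), v) σ := by
    simpa using (hasDerivAt_id σ).prodMk (((hasDerivAt_id σ).const_mul v).const_add c)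
  rw [pd1, pd2, (hasDerivAt_pd1 hf).deriv, (hasDerivAt_pd2 hf).deriv]
  set L := fderiv ℝ (uncurry f) (σ, c + v * σ)
  have hdir : L (1, 0) + v * L (0, 1) = L (1, v) := by
    rw [← smul_eq_mul, ← L.map_smul, ← L.map_add]; simp
  rw [hdir]
  exact hf.hasFDerivAt.comp_hasDerivAt (x := σ) (f := fun s => (s, c + v * s)) hline

theorem sub_le_integral_of_characteristic {f : ℝ → ℝ → ℝ} {q : ℝ → ℝ} {v a b : ℝ} (θ : ℝ)
    (hf : Differentiable ℝ (uncurry f)) (hab : a ≤ b) (hq : IntegrableOn q (Icc a b))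
    (hderiv : ∀ σ ∈ Ioo a b, ∀ x, -q σ ≤ pd1 f σ x + v * pd2 f σ x) :
    f a θ - f b (θ + v * (b - a)) ≤ ∫ σ in a..b, q σ := by
  set c := θ - v * a
  have hu : ∀ σ, HasDerivAt (fun s => -f s (c + v * s))
      (-(pd1 f σ (c + v * σ) + v * pd2 f σ (c + v * σ))) σ :=
    fun σ => (hasDerivAt_comp_line (hf _)).neg
  have key := intervalIntegral.sub_le_integral_of_hasDeriv_right_of_le hab
    (fun σ _ => (hu σ).continuousAt.continuousWithinAt) (fun σ _ => (hu σ).hasDerivWithinAt) hq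
    (fun σ hσ => neg_le.mp (hderiv σ hσ _))
  have hca : c + v * a = θ := by ring
  have hcb : c + v * b = θ + v * (b - a) := by ring
  simp only [hca, hcb] at key
  linarith

theorem le_add_integral_of_characteristics {G H J : ℝ → ℝ → ℝ} {q : ℝ → ℝ} {M s t₀ : ℝ}
    (θ : ℝ) (hG : Differentiable ℝ (uncurry G)) (hH : Differentiable ℝ (uncurry H))
    (hst : s ≤ t₀) (hq : IntegrableOn q (Icc s t₀))
    (hminus : ∀ σ ∈ Ioo s t₀, ∀ x,
      pd1 (fun t θ => G t θ + H t θ) σ x - pd2 (fun t θ => G t θ + H t θ) σ x = J σ x)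
    (hplus : ∀ σ ∈ Ioo s t₀, ∀ x,
      pd1 (fun t θ => G t θ - H t θ) σ x + pd2 (fun t θ => G t θ - H t θ) σ x = J σ x)
    (hJ : ∀ σ ∈ Ioo s t₀, ∀ x, -q σ ≤ J σ x) (hM : ∀ x, G t₀ x + |H t₀ x| ≤ M) :
    G s θ ≤ M + ∫ σ in s..t₀, q σ := by
  have hsum := sub_le_integral_of_characteristic (f := fun t θ => G t θ + H t θ) (v := -1) θ
    (hG.add hH) hst hq fun σ hσ x => by
      rw [neg_one_mul, ← sub_eq_add_neg, hminus σ hσ x]; exact hJ σ hσ x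
  have hdiff := sub_le_integral_of_characteristic (f := fun t θ => G t θ - H t θ) (v := 1) θ
    (hG.sub hH) hst hq fun σ hσ x => by
      rw [one_mul, hplus σ hσ x]; exact hJ σ hσ x
  linarith [hM (θ + -1 * (t₀ - s)), hM (θ + 1 * (t₀ - s)),
    le_abs_self (H t₀ (θ + -1 * (t₀ - s))), neg_abs_le (H t₀ (θ + 1 * (t₀ - s)))]

theorem le_mul_div_of_le_add_integral_div {F : ℝ → ℝ} {M t t₀ : ℝ} (ht : 0 < t) (htt₀ : t ≤ t₀)
    (hF : ContinuousOn F (Icc t t₀)) (hle : ∀ s ∈ Icc t t₀, F s ≤ M + ∫ σ in s..t₀, F σ / σ) :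
    F t ≤ t₀ * M / t := by
  set Φ : ℝ → ℝ := fun s => ∫ σ in s..t₀, F σ / σ
  have hq : ContinuousOn (fun σ => F σ / σ) (Icc t t₀) :=
    hF.div continuousOn_id fun σ hσ => (ht.trans_le hσ.1).ne'
  have hΦ : ContinuousOn Φ (Icc t t₀) := by
    simpa only [uIcc_of_le htt₀] using intervalIntegral.continuousOn_primitive_interval_left
      (μ := volume) (hq.integrableOn_Icc.mono_set (uIcc_of_le htt₀).subset)
  have hΦ' : ∀ s ∈ Ioo t t₀, HasDerivAt Φ (-(F s / s)) s := fun s hs =>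
    intervalIntegral.integral_hasDerivAt_left
      ((hq.mono (Icc_subset_Icc_left hs.1.le)).intervalIntegrable_of_Icc hs.2.le)
      ((hq.mono Ioo_subset_Icc_self).stronglyMeasurableAtFilter isOpen_Ioo s hs)
      (hq.continuousAt (Icc_mem_nhds hs.1 hs.2))
  have hmono : MonotoneOn (fun s => s * (M + Φ s)) (Icc t t₀) := by
    refine monotoneOn_of_hasDerivWithinAt_nonneg (f' := fun s => M + Φ s - F s) (convex_Icc t t₀)
      (continuousOn_id.mul (continuousOn_const.add hΦ)) (fun s hs => ?_) (fun s hs => ?_)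
    · rw [interior_Icc] at hs
      have hd : HasDerivAt (fun s => s * (M + Φ s)) (1 * (M + Φ s) + s * -(F s / s)) s :=
        (hasDerivAt_id' s).mul ((hΦ' s hs).const_add M)
      rw [one_mul, mul_neg, mul_div_cancel₀ _ (ht.trans hs.1).ne', ← sub_eq_add_neg] at hd
      exact hd.hasDerivWithinAt
    · rw [interior_Icc] at hs
      linarith [hle s (Ioo_subset_Icc_self hs)]
  have hend := hmono (left_mem_Icc.2 htt₀) (right_mem_Icc.2 htt₀) htt₀
  simp only [Φ, intervalIntegral.integral_same, add_zero] at hend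
  rw [le_div_iff₀ ht]
  nlinarith [hle t (left_mem_Icc.2 htt₀)]

theorem past_gronwall_energy_bound_general
    (G H J : ℝ → ℝ → ℝ) (I : Set ℝ) (hI : I ⊆ Ioi 0) (hIconn : I.OrdConnected)
    (t₀ : ℝ) (ht₀ : t₀ ∈ I)
    (hG : ContDiff ℝ 1 (Function.uncurry G))
    (hH : ContDiff ℝ 1 (Function.uncurry H))
    (hGper : ∀ t : ℝ, Function.Periodic (G t) (2*π))
    (hHper : ∀ t : ℝ, Function.Periodic (H t) (2*π))
    (hminus : ∀ t ∈ I, ∀ θ : ℝ,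
      pd1 (fun t θ => G t θ + H t θ) t θ - pd2 (fun t θ => G t θ + H t θ) t θ = J t θ)
    (hplus : ∀ t ∈ I, ∀ θ : ℝ,
      pd1 (fun t θ => G t θ - H t θ) t θ + pd2 (fun t θ => G t θ - H t θ) t θ = J t θ)
    (hGpos : ∀ t ∈ I, ∀ θ : ℝ, 0 ≤ G t θ)
    (hJG : ∀ t ∈ I, ∀ θ : ℝ, -(G t θ / t) ≤ J t θ) :
    ∀ t ∈ I, t ≤ t₀ →
      (⨆ θ : ℝ, G t θ) ≤
        2 * ((⨆ θ : ℝ, G t₀ θ) + (⨆ θ : ℝ, |H t₀ θ|)) * (t₀ / t) := by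
  intro t ht htt₀
  have h2π : 2 * π ≠ 0 := by positivity
  have hIcc : Icc t t₀ ⊆ I := hIconn.out ht ht₀
  set F := fun s => ⨆ θ, G s θ
  set M := (⨆ θ, G t₀ θ) + ⨆ θ, |H t₀ θ|
  have hF : Continuous F := continuous_iSup_of_periodic_s8 h2π hG.continuous hGper
  have hGF s θ : G s θ ≤ F s :=
    (hGper s).le_ciSup_of_continuous h2π (hG.continuous.uncurry_left s) θ
  have hM θ : G t₀ θ + |H t₀ θ| ≤ M := add_le_add (hGF t₀ θ) <|
    ((hHper t₀).comp abs).le_ciSup_of_continuous h2π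
      (continuous_abs.comp (hH.continuous.uncurry_left t₀)) θ
  have hJF : ∀ σ ∈ I, ∀ x, -(F σ / σ) ≤ J σ x := fun σ hσ x =>
    (neg_le_neg (div_le_div_of_nonneg_right (hGF σ x) (hI hσ).le)).trans (hJG σ hσ x)
  have henergy : ∀ s ∈ Icc t t₀, F s ≤ M + ∫ σ in s..t₀, F σ / σ := fun s hs => by
    have hsub : Icc s t₀ ⊆ I := (Icc_subset_Icc_left hs.1).trans hIcc
    have hsub' : Ioo s t₀ ⊆ I := Ioo_subset_Icc_self.trans hsub
    have hq : IntegrableOn (fun σ => F σ / σ) (Icc s t₀) :=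
      (hF.continuousOn.div continuousOn_id fun σ hσ => (hI (hsub hσ)).ne').integrableOn_Icc
    exact ciSup_le fun θ => le_add_integral_of_characteristics θ (hG.differentiable one_ne_zero)
      (hH.differentiable one_ne_zero) hs.2 hq (fun σ hσ => hminus σ (hsub' hσ))
      (fun σ hσ => hplus σ (hsub' hσ)) (fun σ hσ => hJF σ (hsub' hσ)) hM
  have hM0 : 0 ≤ M := (add_nonneg (hGpos t₀ ht₀ 0) (abs_nonneg _)).trans (hM 0)
  calc F t ≤ t₀ * M / t := le_mul_div_of_le_add_integral_div (hI ht) htt₀ hF.continuousOn henergy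
    _ = M * (t₀ / t) := by ring
    _ ≤ 2 * M * (t₀ / t) := by nlinarith [mul_nonneg hM0 (div_nonneg (hI ht₀).le (hI ht).le)]

/-- The past (contracting)-direction Gronwall energy bound for the T³-Gowdy
EMDA system: the energy `G` can grow at most like `1/t` as `t` decreases
toward the singularity at `t = 0`. -/
theorem past_gronwall_energy_bound
    (G H J : ℝ → ℝ → ℝ) (I : Set ℝ) (hI : I ⊆ Ioi 0) (hIconn : I.OrdConnected)
    (t₀ : ℝ) (ht₀ : t₀ ∈ I)
    (hG : ContDiff ℝ 1 (Function.uncurry G))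
    (hH : ContDiff ℝ 1 (Function.uncurry H))
    (hJ : ContDiff ℝ 1 (Function.uncurry J))
    (hGper : ∀ t : ℝ, Function.Periodic (G t) (2*π))
    (hHper : ∀ t : ℝ, Function.Periodic (H t) (2*π))
    (hJper : ∀ t : ℝ, Function.Periodic (J t) (2*π))
    (hminus : ∀ t ∈ I, ∀ θ : ℝ,
      pd1 (fun t θ => G t θ + H t θ) t θ - pd2 (fun t θ => G t θ + H t θ) t θ = J t θ)
    (hplus : ∀ t ∈ I, ∀ θ : ℝ,
      pd1 (fun t θ => G t θ - H t θ) t θ + pd2 (fun t θ => G t θ - H t θ) t θ = J t θ)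
    (hGpos : ∀ t ∈ I, ∀ θ : ℝ, 0 ≤ G t θ)
    (hHG : ∀ t ∈ I, ∀ θ : ℝ, |H t θ| ≤ G t θ)
    (hJG : ∀ t ∈ I, ∀ θ : ℝ, -(G t θ / t) ≤ J t θ) :
    ∀ t ∈ I, t ≤ t₀ →
      (⨆ θ : ℝ, G t θ) ≤
        2 * ((⨆ θ : ℝ, G t₀ θ) + (⨆ θ : ℝ, |H t₀ θ|)) * (t₀ / t) :=
  past_gronwall_energy_bound_general G H J I hI hIconn t₀ ht₀ hG hH hGper hHper hminus hplus hGpos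
    hJG
end

section
/- Suppose λ, Z, X, φ, κ, χ, ω are smooth real-valued functions on (0, t₀] × ℝ, 2π-periodic in θ, satisfying the Hamiltonian constraint λ̇ = t[Ż²+Z′²+e^{−2Z}(Ẋ²+X′²)] + 4t·T_tt, and let Λ₀ := sup_θ λ(t₀, θ) (finite by periodicity and continuity). Then for all t ∈ (0, t₀] and all θ: e^{−λ(t,θ)/4}·t^{1/4}·(λ̇(t,θ)/4 + 3/(4t)) ≥ (3/4)·e^{−Λ₀/4}·t^{−3/4}. In particular, setting C := (3/4)e^{−Λ₀/4} > 0, one has inf_θ e^{−λ(t,θ)/4} t^{1/4}(λ̇/4 + 3/(4t)) ≥ C·t^{−3/4} for all 0 < t ≤ t₀, so this quantity tends uniformly to +∞ as t → 0. -/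
open Real Set

/-- Smoothness of a function of two real variables. -/
def Smooth2 (f : ℝ → ℝ → ℝ) : Prop := ContDiff ℝ (⊤ : ℕ∞) (Function.uncurry f)

/-- The six T³-Gowdy EMDA evolution equations, at the point `(t, θ)`. -/
noncomputable def GowdyEMDAEqns (aM aA : ℝ) (Z X φ κ χ ω : ℝ → ℝ → ℝ) (t θ : ℝ) : Prop :=
  -- equation for Z
  (t^2 * pd1 (pd1 Z) t θ + t * pd1 Z t θ - t^2 * pd2 (pd2 Z) t θ
    + t^2 * exp (-(2*Z t θ)) * ((pd1 X t θ)^2 - (pd2 X t θ)^2)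
    - 2*t* exp (-(2*aM*φ t θ)) *
      (-(exp (-(Z t θ))) * ((X t θ * pd1 ω t θ - pd1 χ t θ)^2
            - (X t θ * pd2 ω t θ - pd2 χ t θ)^2)
        + exp (Z t θ) * ((pd1 ω t θ)^2 - (pd2 ω t θ)^2)) = 0)
  -- equation for X
  ∧ (t^2 * pd1 (pd1 X) t θ + t * pd1 X t θ - t^2 * pd2 (pd2 X) t θ
    - 2*t^2 * (pd1 X t θ * pd1 Z t θ - pd2 X t θ * pd2 Z t θ)
    - 4*t* exp (-(2*aM*φ t θ)) * exp (Z t θ) *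
      (((pd1 ω t θ)^2 - (pd2 ω t θ)^2) * X t θ
        - (pd1 ω t θ * pd1 χ t θ - pd2 ω t θ * pd2 χ t θ)) = 0)
  -- equation for φ
  ∧ (t^2 * pd1 (pd1 φ) t θ + t * pd1 φ t θ - t^2 * pd2 (pd2 φ) t θ
    - (aA/2) * t^2 * exp (4*aA*φ t θ) * ((pd1 κ t θ)^2 - (pd2 κ t θ)^2)
    + aM*t* exp (-(2*aM*φ t θ)) *
      (exp (-(Z t θ)) * ((X t θ * pd1 ω t θ - pd1 χ t θ)^2
            - (X t θ * pd2 ω t θ - pd2 χ t θ)^2)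
        + exp (Z t θ) * ((pd1 ω t θ)^2 - (pd2 ω t θ)^2)) = 0)
  -- equation for κ
  ∧ (t^2 * pd1 (pd1 κ) t θ + t * pd1 κ t θ - t^2 * pd2 (pd2 κ) t θ
    + 4*aA*t^2 * (pd1 φ t θ * pd1 κ t θ - pd2 φ t θ * pd2 κ t θ) = 0)
  -- equation for χ
  ∧ (pd1 (pd1 χ) t θ - pd2 (pd2 χ) t θ
    - (pd1 Z t θ + 2*aM*pd1 φ t θ) * pd1 χ t θ
    + (pd2 Z t θ + 2*aM*pd2 φ t θ) * pd2 χ t θ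
    + (2*X t θ * pd1 Z t θ - pd1 X t θ) * pd1 ω t θ
    - (2*X t θ * pd2 Z t θ - pd2 X t θ) * pd2 ω t θ
    + exp (-(2*Z t θ)) * X t θ *
      (pd1 X t θ * (X t θ * pd1 ω t θ - pd1 χ t θ)
        + pd2 X t θ * (X t θ * pd2 ω t θ - pd2 χ t θ)) = 0)
  -- equation for ω
  ∧ (pd1 (pd1 ω) t θ - pd2 (pd2 ω) t θ
    + (pd1 Z t θ - 2*aM*pd1 φ t θ) * pd1 ω t θ
    - (pd2 Z t θ - 2*aM*pd2 φ t θ) * pd2 ω t θ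
    + exp (-(2*Z t θ)) *
      (pd1 X t θ * (X t θ * pd1 ω t θ - pd1 χ t θ)
        + pd2 X t θ * (X t θ * pd2 ω t θ - pd2 χ t θ)) = 0)

/-- The energy density 𝒢. -/
noncomputable def GEn (aM aA : ℝ) (Z X φ κ χ ω : ℝ → ℝ → ℝ) (t θ : ℝ) : ℝ :=
  t/2 * ((pd1 Z t θ)^2 + (pd2 Z t θ)^2
      + exp (-(2*Z t θ)) * ((pd1 X t θ)^2 + (pd2 X t θ)^2))
  + 2 * exp (-(2*aM*φ t θ)) *
      (exp (-(Z t θ)) * ((X t θ * pd1 ω t θ - pd1 χ t θ)^2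
          + (X t θ * pd2 ω t θ - pd2 χ t θ)^2)
        + exp (Z t θ) * ((pd1 ω t θ)^2 + (pd2 ω t θ)^2))
  + 2*t*((pd1 φ t θ)^2 + (pd2 φ t θ)^2)
  + t/2 * exp (4*aA*φ t θ) * ((pd1 κ t θ)^2 + (pd2 κ t θ)^2)

/-- The momentum density ℋ. -/
noncomputable def HEn (aM aA : ℝ) (Z X φ κ χ ω : ℝ → ℝ → ℝ) (t θ : ℝ) : ℝ :=
  t * (pd1 Z t θ * pd2 Z t θ + exp (-(2*Z t θ)) * pd1 X t θ * pd2 X t θ)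
  + 4 * exp (-(2*aM*φ t θ)) *
      (exp (-(Z t θ)) * (X t θ * pd1 ω t θ - pd1 χ t θ) * (X t θ * pd2 ω t θ - pd2 χ t θ)
        + exp (Z t θ) * pd1 ω t θ * pd2 ω t θ)
  + 4*t* pd1 φ t θ * pd2 φ t θ
  + t * exp (4*aA*φ t θ) * pd1 κ t θ * pd2 κ t θ

/-- The source term J appearing in the characteristic energy identities. -/
noncomputable def JEn (aA : ℝ) (Z X φ κ : ℝ → ℝ → ℝ) (t θ : ℝ) : ℝ :=
  1/2 * (-(pd1 Z t θ)^2 + (pd2 Z t θ)^2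
      + exp (-(2*Z t θ)) * (-(pd1 X t θ)^2 + (pd2 X t θ)^2))
  + 2 * (-(pd1 φ t θ)^2 + (pd2 φ t θ)^2
      + 1/4 * exp (4*aA*φ t θ) * (-(pd1 κ t θ)^2 + (pd2 κ t θ)^2))

/-- The energy-momentum component `T_tt`. -/
noncomputable def Ttt (aM aA : ℝ) (Z X φ κ χ ω : ℝ → ℝ → ℝ) (t θ : ℝ) : ℝ :=
  ((pd1 φ t θ)^2 + (pd2 φ t θ)^2)
  + 1/4 * exp (4*aA*φ t θ) * ((pd1 κ t θ)^2 + (pd2 κ t θ)^2)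
  + 1/t * exp (-(2*aM*φ t θ)) *
      (exp (-(Z t θ)) * ((X t θ * pd1 ω t θ - pd1 χ t θ)^2
          + (X t θ * pd2 ω t θ - pd2 χ t θ)^2)
        + exp (Z t θ) * ((pd1 ω t θ)^2 + (pd2 ω t θ)^2))

/-- The energy-momentum component `T_tθ`. -/
noncomputable def Ttθ (aM aA : ℝ) (Z X φ κ χ ω : ℝ → ℝ → ℝ) (t θ : ℝ) : ℝ :=
  pd1 φ t θ * pd2 φ t θ
  + 1/4 * exp (4*aA*φ t θ) * pd1 κ t θ * pd2 κ t θ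
  + 1/t * exp (-(2*aM*φ t θ)) *
      (exp (-(Z t θ)) * (X t θ * pd1 ω t θ - pd1 χ t θ) * (X t θ * pd2 ω t θ - pd2 χ t θ)
        + exp (Z t θ) * pd1 ω t θ * pd2 ω t θ)

/-- Crushing-singularity estimate: with `Λ₀ := sup_θ λ(t₀,θ)`, the mean
curvature `−tr K = e^{−λ/4} t^{1/4} (λ̇/4 + 3/(4t))` of the constant-`t`
hypersurfaces satisfies `−tr K ≥ (3/4) e^{−Λ₀/4} t^{−3/4}` on `(0, t₀] × ℝ`,
so it tends uniformly to `+∞` as `t → 0`. -/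
theorem gowdy_EMDA_crushing_singularity
    (aM aA : ℝ) (lam Z X φ κ χ ω : ℝ → ℝ → ℝ)
    (hlam : Smooth2 lam) (hZ : Smooth2 Z) (hX : Smooth2 X) (hφ : Smooth2 φ)
    (hκ : Smooth2 κ) (hχ : Smooth2 χ) (hω : Smooth2 ω)
    (t₀ : ℝ) (ht₀ : 0 < t₀)
    (hlamper : ∀ t : ℝ, Function.Periodic (lam t) (2*π))
    (hZper : ∀ t : ℝ, Function.Periodic (Z t) (2*π))
    (hXper : ∀ t : ℝ, Function.Periodic (X t) (2*π))
    (hφper : ∀ t : ℝ, Function.Periodic (φ t) (2*π))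
    (hκper : ∀ t : ℝ, Function.Periodic (κ t) (2*π))
    (hχper : ∀ t : ℝ, Function.Periodic (χ t) (2*π))
    (hωper : ∀ t : ℝ, Function.Periodic (ω t) (2*π))
    (hconstr : ∀ t ∈ Ioc 0 t₀, ∀ θ : ℝ,
      pd1 lam t θ = t * ((pd1 Z t θ)^2 + (pd2 Z t θ)^2
          + exp (-(2*Z t θ)) * ((pd1 X t θ)^2 + (pd2 X t θ)^2))
        + 4 * t * Ttt aM aA Z X φ κ χ ω t θ)
    (Λ₀ : ℝ) (hΛ₀ : Λ₀ = ⨆ θ : ℝ, lam t₀ θ) :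
    (∀ t ∈ Ioc 0 t₀, ∀ θ : ℝ,
      (3/4) * exp (-Λ₀/4) * t ^ (-(3:ℝ)/4)
        ≤ exp (-(lam t θ)/4) * t ^ ((1:ℝ)/4) * (pd1 lam t θ / 4 + 3/(4*t))) ∧
    (0 < (3/4) * exp (-Λ₀/4) ∧
      ∀ t ∈ Ioc 0 t₀,
        (3/4) * exp (-Λ₀/4) * t ^ (-(3:ℝ)/4)
          ≤ ⨅ θ : ℝ, exp (-(lam t θ)/4) * t ^ ((1:ℝ)/4)
              * (pd1 lam t θ / 4 + 3/(4*t))) := by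
  -- continuity of lam t₀
  have hlamc : Continuous (lam t₀) := by
    have := hlam.continuous
    exact this.comp (continuous_const.prodMk continuous_id)
  -- bounded above
  have hbdd : BddAbove (Set.range (lam t₀)) := by
    rw [← (hlamper t₀).image_Icc (by positivity) 0]
    exact (isCompact_Icc.image hlamc).bddAbove
  -- lam t₀ θ ≤ Λ₀
  have hle0 : ∀ θ : ℝ, lam t₀ θ ≤ Λ₀ := fun θ => hΛ₀ ▸ le_ciSup hbdd θ
  -- pd1 lam nonneg on (0,t₀]
  have hpd1 : ∀ t ∈ Ioc 0 t₀, ∀ θ : ℝ, 0 ≤ pd1 lam t θ := by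
    intro t ht θ
    rw [hconstr t ht θ]
    have htpos : (0:ℝ) < t := ht.1
    have hT : 0 ≤ Ttt aM aA Z X φ κ χ ω t θ := by
      unfold Ttt
      positivity
    positivity
  -- differentiability of s ↦ lam s θ
  have hdiff : ∀ θ : ℝ, Differentiable ℝ (fun s => lam s θ) := by
    intro θ
    exact (hlam.differentiable (by simp)).comp (Differentiable.prodMk differentiable_id (differentiable_const θ))
  -- lam t θ ≤ Λ₀ for t ∈ Ioc 0 t₀
  have hlamle : ∀ t ∈ Ioc 0 t₀, ∀ θ : ℝ, lam t θ ≤ Λ₀ := by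
    intro t ht θ
    refine le_trans ?_ (hle0 θ)
    have hmono : MonotoneOn (fun s => lam s θ) (Icc t t₀) := by
      apply monotoneOn_of_deriv_nonneg (convex_Icc t t₀)
        ((hdiff θ).continuous.continuousOn)
        ((hdiff θ).differentiableOn)
      intro s hs
      rw [interior_Icc] at hs
      exact hpd1 s ⟨lt_trans ht.1 hs.1, hs.2.le⟩ θ
    exact hmono ⟨le_refl t, ht.2⟩ ⟨ht.1.le.trans ht.2 |>.trans (le_refl t₀) |> fun _ => ht.2, le_refl t₀⟩ ht.2
  -- main pointwise estimate
  have hmain : ∀ t ∈ Ioc 0 t₀, ∀ θ : ℝ,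
      (3/4) * exp (-Λ₀/4) * t ^ (-(3:ℝ)/4)
        ≤ exp (-(lam t θ)/4) * t ^ ((1:ℝ)/4) * (pd1 lam t θ / 4 + 3/(4*t)) := by
    intro t ht θ
    have htpos : (0:ℝ) < t := ht.1
    have h1 : exp (-Λ₀/4) ≤ exp (-(lam t θ)/4) := by
      apply exp_le_exp.2
      have := hlamle t ht θ
      linarith
    have h2 : (3/(4*t)) ≤ pd1 lam t θ / 4 + 3/(4*t) := by
      have := hpd1 t ht θ
      linarith
    have heq : (3/4) * exp (-Λ₀/4) * t ^ (-(3:ℝ)/4)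
        = exp (-Λ₀/4) * t ^ ((1:ℝ)/4) * (3/(4*t)) := by
      have hts : t ^ (-(3:ℝ)/4) * t = t ^ ((1:ℝ)/4) := by
        rw [← Real.rpow_add_one htpos.ne']
        norm_num
      rw [← hts]
      field_simp
    rw [heq]
    have hp1 : (0:ℝ) < t ^ ((1:ℝ)/4) := Real.rpow_pos_of_pos htpos _
    have hp2 : (0:ℝ) < 3/(4*t) := by positivity
    have := mul_le_mul (mul_le_mul_of_nonneg_right h1 hp1.le) h2 hp2.le
      (by positivity)
    exact this
  refine ⟨hmain, by positivity, ?_⟩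
  intro t ht
  exact le_ciInf (fun θ => hmain t ht θ)
end

section
/- Let h : ℝ → ℝ be a C¹ function that is 2π-periodic with |h′(θ)| < 1 for all θ. Let P : ℝ → ℝ be continuous with P(θ) ≥ c for all θ, where c > 0, and suppose the function v(θ) := P(θ)·h′(θ)/√(1 − h′(θ)²) is differentiable with |v′(θ)| ≤ M for all θ. Then, setting K := 2πM/c, one has |h′(θ)| ≤ K/√(1 + K²) < 1 for all θ; i.e. h′ is bounded uniformly away from 1 in absolute value. -/
open Real

/-- Uniform spacelikeness estimate from the proof of the CMC-foliation lemma: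
if `h` is `C¹`, `2π`-periodic with `|h′| < 1`, `P ≥ c > 0` is continuous, and
`v := P·h′/√(1−h′²)` is differentiable with `|v′| ≤ M`, then with
`K := 2πM/c` one has `|h′(θ)| ≤ K/√(1+K²) < 1` for all `θ`. -/
theorem cmc_uniformly_spacelike
    (h P : ℝ → ℝ) (c M : ℝ) (hc : 0 < c)
    (hh : ContDiff ℝ 1 h)
    (hper : Function.Periodic h (2*π))
    (hh' : ∀ θ : ℝ, |deriv h θ| < 1)
    (hPc : Continuous P)
    (hPge : ∀ θ : ℝ, c ≤ P θ)
    (v : ℝ → ℝ)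
    (hv : v = fun θ => P θ * deriv h θ / Real.sqrt (1 - (deriv h θ)^2))
    (hvdiff : Differentiable ℝ v)
    (hv' : ∀ θ : ℝ, |deriv v θ| ≤ M) :
    ∀ θ : ℝ, |deriv h θ| ≤ (2*π*M/c) / Real.sqrt (1 + (2*π*M/c)^2) ∧
      (2*π*M/c) / Real.sqrt (1 + (2*π*M/c)^2) < 1 := by
  have hM : 0 ≤ M := le_trans (abs_nonneg _) (hv' 0)
  set K : ℝ := 2*π*M/c with hK
  have hK0 : 0 ≤ K := by positivity
  have hsq : 0 < Real.sqrt (1 + K^2) := Real.sqrt_pos.2 (by positivity)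
  have hKlt : K < Real.sqrt (1 + K^2) := by
    nth_rewrite 1 [← Real.sqrt_sq hK0]
    exact Real.sqrt_lt_sqrt (by positivity) (by linarith)
  have hlt1 : K / Real.sqrt (1 + K^2) < 1 := (div_lt_one hsq).2 hKlt
  intro θ
  refine ⟨?_, hlt1⟩
  -- find a zero of deriv h in (θ - 2π, θ)
  have hπ : 0 < π := Real.pi_pos
  have hcont : ContinuousOn h (Set.Icc (θ - 2*π) θ) :=
    (hh.continuous).continuousOn
  have heq : h (θ - 2*π) = h θ := by
    have := hper (θ - 2*π)
    simp at this
    exact this.symm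
  obtain ⟨θ₀, hθ₀mem, hθ₀⟩ := exists_deriv_eq_zero (by linarith) hcont heq
  have hvθ₀ : v θ₀ = 0 := by simp [hv, hθ₀]
  -- MVT bound
  have hmvt : |v θ - v θ₀| ≤ M * |θ - θ₀| := by
    have := Convex.norm_image_sub_le_of_norm_deriv_le (s := Set.univ)
      (fun x _ => hvdiff x) (fun x _ => hv' x) convex_univ (Set.mem_univ θ₀)
      (Set.mem_univ θ)
    simpa [Real.norm_eq_abs] using this
  have hdist : |θ - θ₀| ≤ 2*π := by
    obtain ⟨h1, h2⟩ := hθ₀mem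
    rw [abs_of_nonneg (by linarith)]; linarith
  have hvbound : |v θ| ≤ 2*π*M := by
    calc |v θ| = |v θ - v θ₀| := by rw [hvθ₀, sub_zero]
    _ ≤ M * |θ - θ₀| := hmvt
    _ ≤ M * (2*π) := by exact mul_le_mul_of_nonneg_left hdist hM
    _ = 2*π*M := by ring
  -- unpack
  set x := deriv h θ with hx
  have hx1 : |x| < 1 := hh' θ
  have hx2 : x^2 < 1 := by
    have := abs_lt.1 hx1; nlinarith
  have hs : 0 < Real.sqrt (1 - x^2) := Real.sqrt_pos.2 (by linarith)
  have hvθ : |v θ| = P θ * |x| / Real.sqrt (1 - x^2) := by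
    rw [hv]
    simp only []
    rw [abs_div, abs_mul, abs_of_pos (lt_of_lt_of_le hc (hPge θ)),
      abs_of_pos hs]
  have hPθ : c ≤ P θ := hPge θ
  have hratio : |x| / Real.sqrt (1 - x^2) ≤ K := by
    have h1 : c * (|x| / Real.sqrt (1 - x^2)) ≤ P θ * (|x| / Real.sqrt (1 - x^2)) :=
      mul_le_mul_of_nonneg_right hPθ (by positivity)
    have h2 : P θ * (|x| / Real.sqrt (1 - x^2)) ≤ 2*π*M := by
      have : P θ * |x| / Real.sqrt (1 - x^2) ≤ 2*π*M := hvθ ▸ hvbound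
      linarith [this, (mul_div_assoc (P θ) (|x|) (Real.sqrt (1 - x^2)))]
    rw [hK, le_div_iff₀ hc, mul_comm]
    linarith
  -- from |x| ≤ K * sqrt(1-x²) derive |x| ≤ K / sqrt(1+K²)
  have hxle : |x| ≤ K * Real.sqrt (1 - x^2) := by
    rw [div_le_iff₀ hs] at hratio; linarith
  have hsqeq : (Real.sqrt (1 - x^2))^2 = 1 - x^2 := Real.sq_sqrt (by linarith)
  have hkey : x^2 * (1 + K^2) ≤ K^2 := by
    have := mul_self_le_mul_self (abs_nonneg x) hxle
    have hxx : x^2 ≤ K^2 * (1 - x^2) := by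
      nlinarith [sq_abs x]
    nlinarith
  rw [le_div_iff₀ hsq]
  have hsq2 : (|x| * Real.sqrt (1 + K^2))^2 ≤ K^2 := by
    rw [mul_pow, Real.sq_sqrt (by positivity : (0:ℝ) ≤ 1 + K^2), sq_abs]
    nlinarith
  calc |x| * Real.sqrt (1 + K^2)
      = Real.sqrt ((|x| * Real.sqrt (1 + K^2))^2) :=
        (Real.sqrt_sq (by positivity)).symm
    _ ≤ Real.sqrt (K^2) := Real.sqrt_le_sqrt hsq2
    _ = K := Real.sqrt_sq hK0
end
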